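/- arXiv:1907.12657 — 2 statements merged into one kernel-verified Lean document; each statement's English description precedes it below -/
import Mathlib

section
/- Let a, b be positive integers and (k1,k2) ∈ ℤ²_{≥0}. Then in ℚ[x,y,z] modulo the ideal (ax+by): ∑_{(i,j)∈S_{a,b}\{(0,0)}} (a!/(a-i)!)·(b!/(b-j)!)·binom(k1+i,k1)·binom(k2+j,k2)·C(k1+i,k2+j,ℓ) ≡ 0 for every ℓ ≥ 0, where S_{a,b} = {(i,j) : 0≤i≤a, 0≤j≤b}. -/
/-- Stirling numbers of the second kind. -/
def stirling2 : ℕ → ℕ → ℕ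
  | 0, 0 => 1
  | 0, _ + 1 => 0
  | _ + 1, 0 => 0
  | n + 1, k + 1 => stirling2 n k + (k + 1) * stirling2 n (k + 1)

open MvPolynomial in
/-- The polynomial `C(k1,k2,ℓ)`, here with coefficients in `ℚ`. -/
noncomputable def Cpoly (k1 k2 l : ℕ) : MvPolynomial (Fin 3) ℚ :=
  ∑ i1 ∈ Finset.range (l + 1), ∑ i2 ∈ Finset.range (l + 1 - i1),
    (MvPolynomial.C ((l.choose i1 * (l - i1).choose i2
        * stirling2 i1 k1 * stirling2 i2 k2 : ℕ) : ℚ)) *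
      X 0 ^ i1 * X 1 ^ i2 * X 2 ^ (l - i1 - i2)

open MvPolynomial in
/-- `A_{ij} = i·x + j·y + z`. -/
noncomputable def Apoly (i j : ℕ) : MvPolynomial (Fin 3) ℚ :=
  (i : MvPolynomial (Fin 3) ℚ) * X 0 + (j : MvPolynomial (Fin 3) ℚ) * X 1 + X 2

/-! With `E(t) = eᵗ - 1` one has `E(t)ᵏ = k! ∑ₙ S(n,k) tⁿ / n!`, so `C(k₁,k₂,ℓ)` is
`ℓ! / (k₁! k₂!)` times the coefficient of `tˡ` in `E(xt)^k₁ E(yt)^k₂ e^{zt}`. Expanding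
`E(xt)^k₁ e^{axt} = E(xt)^k₁ (E(xt) + 1)ᵃ` by the binomial theorem, and likewise in `y`, shows that
the sum over all of `S_{a,b}`, including `(0,0)`, is `C(k₁,k₂,ℓ)` evaluated at `z ↦ ax + by + z`.
Modulo `ax + by` this is `C(k₁,k₂,ℓ)` again, which is the `(0,0)` term. -/

section StirlingEGF

open Finset PowerSeries Nat

theorem stirling2_succ_succ (n k : ℕ) :
    stirling2 (n + 1) (k + 1) = stirling2 n k + (k + 1) * stirling2 n (k + 1) := rfl

theorem stirling2_succ_succ_eq_sum (n k : ℕ) :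
    stirling2 (n + 1) (k + 1) = ∑ p ∈ range (n + 1), n.choose p * stirling2 p k := by
  induction n generalizing k with
  | zero => simp [stirling2]
  | succ n ih =>
    have hshift : ∑ p ∈ range (n + 1), n.choose p * stirling2 (p + 1) k =
        stirling2 (n + 1) k + k * stirling2 (n + 1) (k + 1) := by
      cases k with
      | zero => simp [stirling2]
      | succ k =>
        simp only [stirling2_succ_succ _ k, mul_add, sum_add_distrib, ← ih, mul_left_comm _ (k + 1),
          ← mul_sum]
    have htail : ∑ p ∈ range (n + 1), n.choose (p + 1) * stirling2 (p + 1) k + stirling2 0 k =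
        stirling2 (n + 1) (k + 1) := by
      conv_rhs => rw [ih, sum_range_succ']
      rw [sum_range_succ, choose_succ_self, zero_mul, add_zero, choose_zero_right, one_mul]
    rw [sum_range_succ', stirling2_succ_succ (n + 1)]
    simp only [choose_succ_succ', add_mul, sum_add_distrib, hshift, choose_zero_right, one_mul]
    rw [add_assoc, htail]
    ring

theorem pow_mul_add_one_pow {R : Type*} [CommSemiring R] (e : R) (k c : ℕ) :
    e ^ k * (e + 1) ^ c = ∑ i ∈ range (c + 1), (c.choose i : R) * e ^ (k + i) := by
  rw [add_pow, mul_sum]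
  refine sum_congr rfl fun i _ => ?_
  rw [one_pow, mul_one, pow_add]
  ring

theorem descFactorial_mul_add_choose_div_factorial (a i k : ℕ) :
    (a.descFactorial i * (k + i).choose k : ℚ) / (k + i)! = a.choose i / k ! := by
  have hchoose : ((k + i).choose i : ℚ) ≠ 0 := by exact_mod_cast (choose_pos (by omega)).ne'
  rw [← add_choose_mul_factorial_mul_factorial k i, choose_symm_add,
    descFactorial_eq_factorial_mul_choose]
  push_cast
  field_simp

variable {A : Type*} [CommRing A] [Algebra ℚ A]

theorem coeff_exp_sub_one_pow (k n : ℕ) :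
    coeff n ((exp A - 1) ^ k) = algebraMap ℚ A (k ! * stirling2 n k / n !) := by
  induction k generalizing n with
  | zero => cases n <;> simp [stirling2, coeff_one]
  | succ k ih =>
    have hsum : ∑ p ∈ range (n + 1), (k ! * stirling2 p k / p ! * (1 / (n - p)!) : ℚ) =
        k ! / n ! * stirling2 (n + 1) (k + 1) := by
      rw [stirling2_succ_succ_eq_sum, Nat.cast_sum, mul_sum]
      refine sum_congr rfl fun p hp => ?_
      rw [Nat.cast_mul, Nat.cast_choose ℚ (mem_range_succ_iff.mp hp)]
      field_simp
    rw [pow_succ, mul_sub, mul_one, map_sub, coeff_mul, Nat.sum_antidiagonal_eq_sum_range_succ_mk]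
    simp only [ih, coeff_exp, ← map_mul, ← map_sum, ← map_sub, hsum]
    congr 1
    rw [stirling2_succ_succ, factorial_succ]
    field_simp
    push_cast
    ring

noncomputable def CpolyAt (k1 k2 l : ℕ) (x y z : A) : A :=
  ∑ i1 ∈ range (l + 1), ∑ i2 ∈ range (l + 1 - i1),
    ((l.choose i1 * (l - i1).choose i2 * stirling2 i1 k1 * stirling2 i2 k2 : ℕ) : A) *
      x ^ i1 * y ^ i2 * z ^ (l - i1 - i2)

noncomputable def stirlingEGF (k1 k2 : ℕ) (x y z : A) : A⟦X⟧ :=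
  rescale x ((exp A - 1) ^ k1) * (rescale y ((exp A - 1) ^ k2) * rescale z (exp A))

theorem CpolyAt_eq_coeff_stirlingEGF (k1 k2 l : ℕ) (x y z : A) :
    CpolyAt k1 k2 l x y z =
      algebraMap ℚ A (l ! / (k1 ! * k2 !)) * coeff l (stirlingEGF k1 k2 x y z) := by
  rw [stirlingEGF, coeff_mul, Nat.sum_antidiagonal_eq_sum_range_succ_mk, CpolyAt, mul_sum]
  refine sum_congr rfl fun i1 h1 => ?_
  have h1 : i1 ≤ l := mem_range_succ_iff.mp h1
  rw [coeff_mul, Nat.sum_antidiagonal_eq_sum_range_succ_mk, show l + 1 - i1 = l - i1 + 1 by omega,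
    mul_sum, mul_sum]
  refine sum_congr rfl fun i2 h2 => ?_
  have h2 : i2 ≤ l - i1 := mem_range_succ_iff.mp h2
  have hq : ((l.choose i1 * (l - i1).choose i2 * stirling2 i1 k1 * stirling2 i2 k2 : ℕ) : ℚ) =
      l ! / (k1 ! * k2 !) * (k1 ! * stirling2 i1 k1 / i1 !) *
        (k2 ! * stirling2 i2 k2 / i2 !) * (1 / (l - i1 - i2)!) := by
    push_cast
    rw [Nat.cast_choose ℚ h1, Nat.cast_choose ℚ h2, Nat.sub_sub]
    field_simp
  simp only [coeff_rescale, coeff_exp_sub_one_pow, coeff_exp, ← map_natCast (algebraMap ℚ A), hq,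
    map_mul]
  ring

theorem sum_choose_mul_stirlingEGF (a b k1 k2 : ℕ) (x y z : A) :
    ∑ p ∈ range (a + 1) ×ˢ range (b + 1),
        ((a.choose p.1 * b.choose p.2 : ℕ) : A⟦X⟧) * stirlingEGF (k1 + p.1) (k2 + p.2) x y z =
      stirlingEGF k1 k2 x y (a * x + b * y + z) := by
  have hexp : rescale (a * x + b * y + z) (exp A) =
      rescale x (exp A ^ a) * rescale y (exp A ^ b) * rescale z (exp A) := by
    rw [exp_pow_eq_rescale_exp, exp_pow_eq_rescale_exp, rescale_rescale, rescale_rescale,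
      exp_mul_exp_eq_exp_add, exp_mul_exp_eq_exp_add]
  have hsplit : stirlingEGF k1 k2 x y (a * x + b * y + z) =
      rescale x ((exp A - 1) ^ k1 * (exp A - 1 + 1) ^ a) *
        (rescale y ((exp A - 1) ^ k2 * (exp A - 1 + 1) ^ b) * rescale z (exp A)) := by
    rw [stirlingEGF, hexp, sub_add_cancel, map_mul, map_mul]
    ring
  rw [hsplit, pow_mul_add_one_pow, pow_mul_add_one_pow, map_sum, map_sum, sum_product]
  simp only [sum_mul, mul_sum]
  conv_rhs => rw [sum_comm]
  refine sum_congr rfl fun i _ => sum_congr rfl fun j _ => ?_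
  simp only [stirlingEGF, map_mul, map_natCast, Nat.cast_mul]
  ring

theorem sum_descFactorial_mul_CpolyAt (a b k1 k2 l : ℕ) (x y z : A) :
    ∑ p ∈ range (a + 1) ×ˢ range (b + 1),
        ((a.descFactorial p.1 * b.descFactorial p.2
            * (k1 + p.1).choose k1 * (k2 + p.2).choose k2 : ℕ) : A) *
          CpolyAt (k1 + p.1) (k2 + p.2) l x y z =
      CpolyAt k1 k2 l x y (a * x + b * y + z) := by
  rw [CpolyAt_eq_coeff_stirlingEGF, ← sum_choose_mul_stirlingEGF, map_sum, mul_sum]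
  refine sum_congr rfl fun ⟨i, j⟩ _ => ?_
  have hq : ((a.descFactorial i * b.descFactorial j * (k1 + i).choose k1 * (k2 + j).choose k2 : ℕ)
        : ℚ) * (l ! / ((k1 + i)! * (k2 + j)!)) =
      l ! / (k1 ! * k2 !) * (a.choose i * b.choose j : ℕ) :=
    calc _ = l ! * ((a.descFactorial i * (k1 + i).choose k1 : ℚ) / (k1 + i)!) *
          ((b.descFactorial j * (k2 + j).choose k2 : ℚ) / (k2 + j)!) := by push_cast; ring
      _ = _ := by
        rw [descFactorial_mul_add_choose_div_factorial, descFactorial_mul_add_choose_div_factorial]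
        push_cast
        ring
  rw [CpolyAt_eq_coeff_stirlingEGF, ← map_natCast (PowerSeries.C (R := A)), coeff_C_mul,
    ← mul_assoc, ← map_natCast (algebraMap ℚ A), ← map_mul, hq, map_mul, map_natCast]
  ring

end StirlingEGF

open MvPolynomial in
theorem map_Cpoly {A : Type*} [CommRing A] [Algebra ℚ A] (q : MvPolynomial (Fin 3) ℚ →ₐ[ℚ] A)
    (k1 k2 l : ℕ) : q (Cpoly k1 k2 l) = CpolyAt k1 k2 l (q (X 0)) (q (X 1)) (q (X 2)) := by
  simp only [Cpoly, CpolyAt, map_sum, map_mul, map_pow, map_natCast]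

open MvPolynomial in
theorem relation_mod_ax_add_by_general (a b : ℕ) (k1 k2 l : ℕ) :
    Ideal.Quotient.mk
        (Ideal.span {(a : MvPolynomial (Fin 3) ℚ) * X 0 + (b : MvPolynomial (Fin 3) ℚ) * X 1})
        (∑ p ∈ (Finset.range (a + 1) ×ˢ Finset.range (b + 1)).erase (0, 0),
          (MvPolynomial.C ((a.descFactorial p.1 * b.descFactorial p.2
              * (k1 + p.1).choose k1 * (k2 + p.2).choose k2 : ℕ) : ℚ))
            * Cpoly (k1 + p.1) (k2 + p.2) l) = 0 := by
  have hrel := Ideal.Quotient.eq_zero_iff_mem.mpr <| Ideal.mem_span_singleton_self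
    ((a : MvPolynomial (Fin 3) ℚ) * X 0 + (b : MvPolynomial (Fin 3) ℚ) * X 1)
  rw [← Ideal.Quotient.mkₐ_eq_mk ℚ, map_add, map_mul, map_mul, map_natCast, map_natCast] at hrel
  rw [← Ideal.Quotient.mkₐ_eq_mk ℚ, Finset.sum_erase_eq_sub (by simp), map_sub, map_sum]
  simp only [map_mul, map_natCast, map_Cpoly]
  rw [sum_descFactorial_mul_CpolyAt, hrel, zero_add]
  simp

open MvPolynomial in
theorem relation_mod_ax_add_by (a b : ℕ) (ha : 0 < a) (hb : 0 < b) (k1 k2 l : ℕ) :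
    Ideal.Quotient.mk
        (Ideal.span {(a : MvPolynomial (Fin 3) ℚ) * X 0 + (b : MvPolynomial (Fin 3) ℚ) * X 1})
        (∑ p ∈ (Finset.range (a + 1) ×ˢ Finset.range (b + 1)).erase (0, 0),
          (MvPolynomial.C ((a.descFactorial p.1 * b.descFactorial p.2
              * (k1 + p.1).choose k1 * (k2 + p.2).choose k2 : ℕ) : ℚ))
            * Cpoly (k1 + p.1) (k2 + p.2) l) = 0 :=
  relation_mod_ax_add_by_general a b k1 k2 l
end

section
/- Let a, b be positive integers and (k1,k2) ∈ ℤ²_{≥0} with k2 ≥ b. Then in ℚ[x,y,z] modulo the ideal (ax - by), for every ℓ ≥ 0: ∑_{j=1}^{a} (a!/(a-j)!)·binom(k1+j,k1)·C(k1+j, k2-b, ℓ) ≡ ∑_{j=1}^{b} (b!/(b-j)!)·binom(k2-b+j, k2-b)·C(k1, k2-b+j, ℓ). -/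
/-
Put `A(m₁, m₂) = m₁x + m₂y + z`. Since `Δᵏ(m ↦ mⁿ)(0) = k!·S(n, k)`, expanding `A^ℓ` gives
`k₁!k₂!·C(k₁, k₂, ℓ) = Δ₁^{k₁}Δ₂^{k₂} A^ℓ` at the origin. With `a!/(a-j)!·binom(k₁+j, k₁)·k₁! =
binom(a, j)·(k₁+j)!` and the Newton formula `∑_{j ≥ 1} binom(a, j)·Δ^{k+j} g(0) = Δᵏg(a) - Δᵏg(0)`,
`k₁!(k₂-b)!` times the left side becomes `Δ₁^{k₁}Δ₂^{k₂-b}` of `A(m₁+a, m₂)^ℓ - A(m₁, m₂)^ℓ`, and the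
right side the same with `A(m₁, m₂+b)^ℓ`. Both agree modulo `ax - by`, because
`A(m₁+a, m₂) - A(m₁, m₂+b) = ax - by`.
-/

open Finset fwdDiff Function
open scoped Nat

section ForwardDifference

variable {G H : Type*} [AddCommGroup G] [AddCommGroup H]

theorem map_fwdDiff_iter_apply {F : Type*} [FunLike F G H] [AddMonoidHomClass F G H] (g : F)
    (f : ℕ → G) (k y : ℕ) : g (Δ_[1] ^[k] f y) = Δ_[1] ^[k] (fun m => g (f m)) y := by
  simp [fwdDiff_iter_eq_sum_shift, map_sum, map_zsmul]

theorem fwdDiff_iter_smul_const {R : Type*} [Ring R] [Module R G] (c : ℕ → R) (v : G)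
    (k y : ℕ) :
    Δ_[1] ^[k] (fun m => c m • v) y = Δ_[1] ^[k] c y • v :=
  (map_fwdDiff_iter_apply ((smulAddHom R G).flip v) c k y).symm

theorem fwdDiff_iter_succ_natCast_mul {R : Type*} [CommRing R] (f : ℕ → R) (k y : ℕ) :
    Δ_[1] ^[k + 1] (fun x : ℕ => (x : R) * f x) y =
      y * Δ_[1] ^[k + 1] f y + (k + 1) * Δ_[1] ^[k] f (y + 1) := by
  induction k generalizing y with
  | zero =>
    simp only [zero_add, iterate_one, iterate_zero, id_eq, fwdDiff, Nat.cast_add, Nat.cast_one,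
      Nat.cast_zero, one_mul]
    ring
  | succ k ih =>
    rw [iterate_succ_apply', fwdDiff, ih, ih, iterate_succ_apply' _ (k + 1),
      iterate_succ_apply' _ k]
    simp only [fwdDiff]
    push_cast
    ring

theorem fwdDiff_iter_natCast_pow_zero {R : Type*} [CommRing R] (n k : ℕ) :
    Δ_[1] ^[k] (fun m : ℕ => (m : R) ^ n) 0 = (k ! * stirling2 n k : ℕ) := by
  induction n generalizing k with
  | zero =>
    cases k with
    | zero => simp [stirling2]
    | succ k =>
      simp [stirling2, iterate_succ_apply, iterate_fixed (fwdDiff_const (1 : ℕ) (0 : R))]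
  | succ n ih =>
    cases k with
    | zero => simp [stirling2]
    | succ k =>
      have step : Δ_[1] ^[k] (fun m : ℕ => (m : R) ^ n) 1 = Δ_[1] ^[k] (fun m : ℕ => (m : R) ^ n) 0
          + Δ_[1] ^[k + 1] (fun m : ℕ => (m : R) ^ n) 0 := by
        rw [iterate_succ_apply', fwdDiff, zero_add, add_sub_cancel]
      simp only [pow_succ', fwdDiff_iter_succ_natCast_mul, step, ih, stirling2,
        Nat.factorial_succ]
      push_cast
      ring

theorem fwdDiff_iter_sub_apply (f g : ℕ → G) (k y : ℕ) :
    Δ_[1] ^[k] (fun m => f m - g m) y = Δ_[1] ^[k] f y - Δ_[1] ^[k] g y := by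
  simp only [fwdDiff_iter_eq_sum_shift, smul_sub, sum_sub_distrib]

theorem fwdDiff_iter_sum_nsmul_apply {ι : Type*} (s : Finset ι) (c : ι → ℕ) (F : ι → ℕ → G)
    (k y : ℕ) :
    Δ_[1] ^[k] (fun m => ∑ i ∈ s, c i • F i m) y = ∑ i ∈ s, c i • Δ_[1] ^[k] (F i) y := by
  simp only [fwdDiff_iter_eq_sum_shift, smul_sum]
  exact sum_comm.trans (sum_congr rfl fun _ _ => sum_congr rfl fun _ _ => smul_comm _ _ _)

theorem sum_Icc_choose_smul_fwdDiff_iter (f : ℕ → G) (k a : ℕ) :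
    ∑ j ∈ Icc 1 a, a.choose j • Δ_[1] ^[k + j] f 0 = Δ_[1] ^[k] f a - Δ_[1] ^[k] f 0 := by
  have newton := shift_eq_sum_fwdDiff_iter 1 (Δ_[1] ^[k] f) a 0
  rw [zero_add, nsmul_one, Nat.cast_id, sum_range_succ'] at newton
  rw [newton, ← Ico_add_one_right_eq_Icc, sum_Ico_eq_sum_range]
  simp [← iterate_add_apply, add_comm k, add_comm 1]

def mixedFwdDiff (f : ℕ → ℕ → G) (p q : ℕ) : G :=
  Δ_[1] ^[p] (fun m => Δ_[1] ^[q] (f m) 0) 0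

theorem map_mixedFwdDiff {F : Type*} [FunLike F G H] [AddMonoidHomClass F G H] (g : F)
    (f : ℕ → ℕ → G) (p q : ℕ) :
    g (mixedFwdDiff f p q) = mixedFwdDiff (fun m₁ m₂ => g (f m₁ m₂)) p q := by
  simp only [mixedFwdDiff, map_fwdDiff_iter_apply]

theorem mixedFwdDiff_finsetSum {ι : Type*} (s : Finset ι) (f : ι → ℕ → ℕ → G) (p q : ℕ) :
    mixedFwdDiff (fun m₁ m₂ => ∑ i ∈ s, f i m₁ m₂) p q = ∑ i ∈ s, mixedFwdDiff (f i) p q := by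
  simp only [mixedFwdDiff, ← sum_fn, fwdDiff_iter_finsetSum, Finset.sum_apply]

theorem mixedFwdDiff_mul_smul {R : Type*} [CommRing R] [Module R G] (u w : ℕ → R) (v : G)
    (p q : ℕ) :
    mixedFwdDiff (fun m₁ m₂ => (u m₁ * w m₂) • v) p q =
      (Δ_[1] ^[p] u 0 * Δ_[1] ^[q] w 0) • v := by
  have inner : ∀ m₁,
      Δ_[1] ^[q] (fun m₂ => (u m₁ * w m₂) • v) 0 = u m₁ • Δ_[1] ^[q] w 0 • v := by
    intro m₁
    simp_rw [mul_comm (u m₁), mul_smul]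
    rw [fwdDiff_iter_smul_const, smul_comm]
  simp only [mixedFwdDiff, inner]
  rw [fwdDiff_iter_smul_const, mul_smul]

theorem sum_choose_smul_mixedFwdDiff_eq {f : ℕ → ℕ → G} {a b : ℕ}
    (hf : ∀ m₁ m₂, f (m₁ + a) m₂ = f m₁ (m₂ + b)) (p q : ℕ) :
    ∑ j ∈ Icc 1 a, a.choose j • mixedFwdDiff f (p + j) q =
      ∑ j ∈ Icc 1 b, b.choose j • mixedFwdDiff f p (q + j) := by
  have hshift : Δ_[1] ^[p] (fun m => Δ_[1] ^[q] (f m) 0) a =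
      Δ_[1] ^[p] (fun m => Δ_[1] ^[q] (f m) b) 0 := by
    rw [← zero_add a, ← fwdDiff_iter_comp_add]
    refine congrArg (fun F => Δ_[1] ^[p] F 0) (funext fun m => ?_)
    rw [show f (m + a) = fun r => f m (r + b) from funext (hf m), fwdDiff_iter_comp_add,
      zero_add]
  calc ∑ j ∈ Icc 1 a, a.choose j • mixedFwdDiff f (p + j) q
      = Δ_[1] ^[p] (fun m => Δ_[1] ^[q] (f m) 0) a
          - Δ_[1] ^[p] (fun m => Δ_[1] ^[q] (f m) 0) 0 :=
        sum_Icc_choose_smul_fwdDiff_iter _ p a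
    _ = Δ_[1] ^[p] (fun m => Δ_[1] ^[q] (f m) b - Δ_[1] ^[q] (f m) 0) 0 := by
        rw [hshift, fwdDiff_iter_sub_apply]
    _ = ∑ j ∈ Icc 1 b, b.choose j • mixedFwdDiff f p (q + j) := by
        simp only [← sum_Icc_choose_smul_fwdDiff_iter, fwdDiff_iter_sum_nsmul_apply]
        rfl

end ForwardDifference

open MvPolynomial

theorem Apoly_add_sub_Apoly_add (m₁ m₂ a b : ℕ) :
    Apoly (m₁ + a) m₂ - Apoly m₁ (m₂ + b) =
      (a : MvPolynomial (Fin 3) ℚ) * X 0 - (b : MvPolynomial (Fin 3) ℚ) * X 1 := by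
  simp only [Apoly]
  push_cast
  ring

theorem Apoly_pow_eq_sum (m₁ m₂ l : ℕ) :
    Apoly m₁ m₂ ^ l = ∑ i₁ ∈ range (l + 1), ∑ i₂ ∈ range (l + 1 - i₁),
      ((m₁ : ℚ) ^ i₁ * (m₂ : ℚ) ^ i₂) • (C ((l.choose i₁ * (l - i₁).choose i₂ : ℕ) : ℚ) *
        X 0 ^ i₁ * X 1 ^ i₂ * X 2 ^ (l - i₁ - i₂)) := by
  rw [Apoly, add_assoc, add_pow]
  refine sum_congr rfl fun i₁ hi₁ => ?_
  rw [Nat.sub_add_comm (mem_range_succ_iff.mp hi₁), add_pow, mul_sum, sum_mul]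
  refine sum_congr rfl fun i₂ _ => ?_
  simp only [smul_eq_C_mul, map_mul, map_pow, map_natCast, Nat.cast_mul, Nat.sub_sub]
  ring

theorem factorial_mul_factorial_smul_Cpoly (k₁ k₂ l : ℕ) :
    ((k₁ ! * k₂ ! : ℕ) : ℚ) • Cpoly k₁ k₂ l = ∑ i₁ ∈ range (l + 1), ∑ i₂ ∈ range (l + 1 - i₁),
      (((k₁ ! * stirling2 i₁ k₁ : ℕ) : ℚ) * ((k₂ ! * stirling2 i₂ k₂ : ℕ) : ℚ)) •
        (C ((l.choose i₁ * (l - i₁).choose i₂ : ℕ) : ℚ) *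
          X 0 ^ i₁ * X 1 ^ i₂ * X 2 ^ (l - i₁ - i₂)) := by
  simp only [Cpoly, smul_sum, smul_eq_C_mul, Nat.cast_mul, map_mul]
  refine sum_congr rfl fun i₁ _ => sum_congr rfl fun i₂ _ => ?_
  ring

theorem mixedFwdDiff_Apoly_pow (k₁ k₂ l : ℕ) :
    mixedFwdDiff (fun m₁ m₂ => Apoly m₁ m₂ ^ l) k₁ k₂ =
      ((k₁ ! * k₂ ! : ℕ) : ℚ) • Cpoly k₁ k₂ l := by
  simp only [Apoly_pow_eq_sum, mixedFwdDiff_finsetSum, mixedFwdDiff_mul_smul,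
    fwdDiff_iter_natCast_pow_zero, factorial_mul_factorial_smul_Cpoly]

theorem descFactorial_mul_choose_mul_factorial (a k j : ℕ) :
    a.descFactorial j * (k + j).choose k * k ! = a.choose j * (k + j)! := by
  rw [Nat.descFactorial_eq_factorial_mul_choose, add_comm k j,
    ← Nat.add_choose_mul_factorial_mul_factorial j k]
  ring

open MvPolynomial in
theorem relation_mod_ax_sub_by_general (a b : ℕ) (k1 k2 l : ℕ) :
    Ideal.Quotient.mk
        (Ideal.span {(a : MvPolynomial (Fin 3) ℚ) * X 0 - (b : MvPolynomial (Fin 3) ℚ) * X 1})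
        (∑ j ∈ Finset.Icc 1 a,
          (MvPolynomial.C ((a.descFactorial j * (k1 + j).choose k1 : ℕ) : ℚ))
            * Cpoly (k1 + j) (k2 - b) l) =
      Ideal.Quotient.mk
        (Ideal.span {(a : MvPolynomial (Fin 3) ℚ) * X 0 - (b : MvPolynomial (Fin 3) ℚ) * X 1})
        (∑ j ∈ Finset.Icc 1 b,
          (MvPolynomial.C ((b.descFactorial j * (k2 - b + j).choose (k2 - b) : ℕ) : ℚ))
            * Cpoly k1 (k2 - b + j) l) := by
  set I := Ideal.span {(a : MvPolynomial (Fin 3) ℚ) * X 0 - (b : MvPolynomial (Fin 3) ℚ) * X 1}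
  set k := k2 - b
  let π := Ideal.Quotient.mkₐ ℚ I
  let f : ℕ → ℕ → MvPolynomial (Fin 3) ℚ ⧸ I := fun m₁ m₂ => π (Apoly m₁ m₂ ^ l)
  have hshift : ∀ m₁ m₂, f (m₁ + a) m₂ = f m₁ (m₂ + b) := fun m₁ m₂ => by
    have hA : π (Apoly (m₁ + a) m₂) = π (Apoly m₁ (m₂ + b)) := Ideal.Quotient.eq.mpr
      (Apoly_add_sub_Apoly_add m₁ m₂ a b ▸ Ideal.mem_span_singleton_self _)
    simp only [f, map_pow, hA]
  have hf : ∀ p q, mixedFwdDiff f p q = ((p ! * q ! : ℕ) : ℚ) • π (Cpoly p q l) := fun p q => by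
    rw [← map_smul, ← mixedFwdDiff_Apoly_pow, map_mixedFwdDiff]
  have key := sum_choose_smul_mixedFwdDiff_eq hshift k1 k
  simp only [hf] at key
  -- `key` is the claim multiplied by `k1! k!`
  rw [← Ideal.Quotient.mkₐ_eq_mk ℚ]
  apply smul_right_injective _ (by positivity : ((k1 ! * k ! : ℕ) : ℚ) ≠ 0)
  simp only [map_sum, smul_sum, ← smul_eq_C_mul, map_smul, smul_smul]
  refine (sum_congr rfl fun j _ => ?_).trans (key.trans (sum_congr rfl fun j _ => ?_)) <;>
    rw [← Nat.cast_smul_eq_nsmul ℚ, smul_smul] <;> congr 1 <;> norm_cast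
  · rw [← mul_assoc (a.choose j), ← descFactorial_mul_choose_mul_factorial]; ring
  · rw [mul_left_comm, ← descFactorial_mul_choose_mul_factorial]; ring

open MvPolynomial in
theorem relation_mod_ax_sub_by (a b : ℕ) (ha : 0 < a) (hb : 0 < b) (k1 k2 l : ℕ)
    (hk2 : b ≤ k2) :
    Ideal.Quotient.mk
        (Ideal.span {(a : MvPolynomial (Fin 3) ℚ) * X 0 - (b : MvPolynomial (Fin 3) ℚ) * X 1})
        (∑ j ∈ Finset.Icc 1 a,
          (MvPolynomial.C ((a.descFactorial j * (k1 + j).choose k1 : ℕ) : ℚ))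
            * Cpoly (k1 + j) (k2 - b) l) =
      Ideal.Quotient.mk
        (Ideal.span {(a : MvPolynomial (Fin 3) ℚ) * X 0 - (b : MvPolynomial (Fin 3) ℚ) * X 1})
        (∑ j ∈ Finset.Icc 1 b,
          (MvPolynomial.C ((b.descFactorial j * (k2 - b + j).choose (k2 - b) : ℕ) : ℚ))
            * Cpoly k1 (k2 - b + j) l) :=
  relation_mod_ax_sub_by_general a b k1 k2 l
end
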